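/- Let Ω ⊆ ℝ² be open, T > 0, and let n₀, V : Ω×(0,T) → ℝ and n = (n₁,n₂,n₃) : Ω×(0,T) → ℝ³ be smooth with n₀ > 0 and |n|/n₀ < 1 pointwise. Assume n satisfies the QSDE1 spin equations pointwise. Then ψ := √(1 + |n|²) satisfies pointwise in Ω×(0,T): ∂_t ψ − div(∇ψ + ψ ∇V) = −ψ⁻¹ ΔV − ψ⁻¹ (G[n] − |∇ψ|²), where G[n] − |∇ψ|² ≥ 0. -/

import Mathlib

open Real Set

/-- Spatial partial derivative `∂_k` on `ℝ²` of a scalar field, with the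
convention `∂₃ = 0` (the index `k = 2`, i.e. the third one, gives `0`). -/
noncomputable def pd (k : Fin 3) (f : (Fin 2 → ℝ) → ℝ) (x : Fin 2 → ℝ) : ℝ :=
  fderiv ℝ f x (fun s : Fin 2 => if (s : ℕ) = (k : ℕ) then 1 else 0)

/-- `curl v = (∂₂v₃, −∂₁v₃, ∂₁v₂ − ∂₂v₁)` of a 3-component field on `ℝ²`. -/
noncomputable def curl3 (v : (Fin 2 → ℝ) → Fin 3 → ℝ) (x : Fin 2 → ℝ) : Fin 3 → ℝ :=
  ![pd 1 (fun y => v y 2) x, -(pd 0 (fun y => v y 2) x),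
    pd 0 (fun y => v y 1) x - pd 1 (fun y => v y 0) x]

/-- `G[v] = ‖∇v‖² + 2 v·curl v + 2|v|²`. -/
noncomputable def Gfun (v : (Fin 2 → ℝ) → Fin 3 → ℝ) (x : Fin 2 → ℝ) : ℝ :=
  (∑ s : Fin 2, ∑ j : Fin 3, (pd s.castSucc (fun y => v y j) x) ^ 2)
    + 2 * ∑ j : Fin 3, v x j * curl3 v x j
    + 2 * ∑ j : Fin 3, (v x j) ^ 2

/-- The gradient `∇f = (∂₁f, ∂₂f)` of a scalar field on `ℝ²`. -/
noncomputable def grad (f : (Fin 2 → ℝ) → ℝ) (x : Fin 2 → ℝ) : Fin 2 → ℝ :=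
  fun s => pd s.castSucc f x

/-- Euclidean dot product on `ℝ²`. -/
def dot2 (a b : Fin 2 → ℝ) : ℝ := ∑ s : Fin 2, a s * b s

/-- Kronecker delta. -/
noncomputable def kd (a b : ℕ) : ℝ := if a = b then 1 else 0

/-- The totally antisymmetric symbol `η` with `η₀₁₂ = 1` (indices `0,1,2`). -/
noncomputable def eta (i j k : ℕ) : ℝ := ((j : ℝ) - (i : ℝ)) * ((k : ℝ) - (j : ℝ)) * ((k : ℝ) - (i : ℝ)) / 2

/-- Euclidean norm on `ℝ³`. -/
noncomputable def normv (v : Fin 3 → ℝ) : ℝ := Real.sqrt (∑ i, (v i) ^ 2)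

/-- `b_k[v] = λ (v_k/|v|²)(1 − 2|v|/(log(1+|v|) − log(1−|v|)))` for `v ≠ 0`,
and `b_k[0] = 0`. -/
noncomputable def bc (lam : ℝ) (v : Fin 3 → ℝ) (k : Fin 3) : ℝ :=
  if normv v = 0 then 0
  else lam * (v k / (normv v) ^ 2) *
    (1 - 2 * normv v / (Real.log (1 + normv v) - Real.log (1 - normv v)))

/-- The flux `J_{js}` of the QSDE1 spin equations, as a function of the spatial
point `y` at time `t`:
`J_{js} = (δ_{jℓ} + b_k[n/n₀] η_{jkℓ}) ∂_s n_ℓ + n_j ∂_s V − 2 η_{jsℓ} n_ℓ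
          + b_k[n/n₀](δ_{jk} n_s − δ_{js} n_k)` (sum over `k, ℓ`). -/
noncomputable def Jflux (lam : ℝ) (n₀ V : ((Fin 2 → ℝ) × ℝ) → ℝ)
    (n : ((Fin 2 → ℝ) × ℝ) → Fin 3 → ℝ) (j : Fin 3) (s : Fin 2) (t : ℝ)
    (y : Fin 2 → ℝ) : ℝ :=
  (∑ l : Fin 3,
      (kd (j : ℕ) (l : ℕ)
          + ∑ k : Fin 3, bc lam (fun i => n (y, t) i / n₀ (y, t)) k
              * eta (j : ℕ) (k : ℕ) (l : ℕ))
        * pd s.castSucc (fun z => n (z, t) l) y)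
    + n (y, t) j * pd s.castSucc (fun z => V (z, t)) y
    - 2 * ∑ l : Fin 3, eta (j : ℕ) (s : ℕ) (l : ℕ) * n (y, t) l
    + ∑ k : Fin 3, bc lam (fun i => n (y, t) i / n₀ (y, t)) k
        * (kd (j : ℕ) (k : ℕ) * n (y, t) s.castSucc - kd (j : ℕ) (s : ℕ) * n (y, t) k)

/-- The source term `F_j` of the QSDE1 spin equations:
`F_j = η_{jkℓ} n_k ∂_ℓ V − 2 n_j + b_k[n/n₀] ∂_k n_j − b_j[n/n₀] Σ_ℓ ∂_ℓ n_ℓ`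
(sum over `k, ℓ`, with the convention `∂₃ = 0`). -/
noncomputable def Fsrc (lam : ℝ) (n₀ V : ((Fin 2 → ℝ) × ℝ) → ℝ)
    (n : ((Fin 2 → ℝ) × ℝ) → Fin 3 → ℝ) (j : Fin 3) (t : ℝ) (x : Fin 2 → ℝ) : ℝ :=
  (∑ k : Fin 3, ∑ l : Fin 3,
      eta (j : ℕ) (k : ℕ) (l : ℕ) * n (x, t) k * pd l (fun z => V (z, t)) x)
    - 2 * n (x, t) j
    + (∑ k : Fin 3, bc lam (fun i => n (x, t) i / n₀ (x, t)) k
        * pd k (fun z => n (z, t) j) x)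
    - bc lam (fun i => n (x, t) i / n₀ (x, t)) j
        * (∑ l : Fin 3, pd l (fun z => n (z, t) l) x)

/-- The QSDE1 spin equations `∂_t n_j = Σ_s ∂_s J_{js} + F_j`, `j = 1,2,3`,
at the space-time point `(x, t)`. -/
noncomputable def SpinEqs (lam : ℝ) (n₀ V : ((Fin 2 → ℝ) × ℝ) → ℝ)
    (n : ((Fin 2 → ℝ) × ℝ) → Fin 3 → ℝ) (x : Fin 2 → ℝ) (t : ℝ) : Prop :=
  ∀ j : Fin 3,
    deriv (fun τ => n (x, τ) j) t
      = (∑ s : Fin 2, pd s.castSucc (fun y => Jflux lam n₀ V n j s t y) x)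
        + Fsrc lam n₀ V n j t x


section Aux
open Filter Asymptotics

noncomputable def ev (k : Fin 3) : Fin 2 → ℝ := fun s : Fin 2 => if (s : ℕ) = (k : ℕ) then 1 else 0

lemma pd_def (k f x) : pd k f x = fderiv ℝ f x (ev k) := rfl

lemma ev_two : ev 2 = 0 := by
  funext s; fin_cases s <;> simp [ev]

lemma pd_two (f : (Fin 2 → ℝ) → ℝ) (x) : pd 2 f x = 0 := by
  rw [pd_def, ev_two]; exact (fderiv ℝ f x).map_zero

lemma pd_of_hasFDerivAt {f : (Fin 2 → ℝ) → ℝ} {L : (Fin 2 → ℝ) →L[ℝ] ℝ} {x}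
    (h : HasFDerivAt f L x) (k : Fin 3) : pd k f x = L (ev k) := by
  rw [pd_def, h.fderiv]

lemma pd_add {f g : (Fin 2 → ℝ) → ℝ} {x} (hf : DifferentiableAt ℝ f x)
    (hg : DifferentiableAt ℝ g x) (k : Fin 3) :
    pd k (fun y => f y + g y) x = pd k f x + pd k g x := by
  have := (hf.hasFDerivAt.fun_add hg.hasFDerivAt)
  rw [pd_of_hasFDerivAt this]; simp [pd_def]

lemma pd_sub {f g : (Fin 2 → ℝ) → ℝ} {x} (hf : DifferentiableAt ℝ f x)
    (hg : DifferentiableAt ℝ g x) (k : Fin 3) :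
    pd k (fun y => f y - g y) x = pd k f x - pd k g x := by
  have := (hf.hasFDerivAt.fun_sub hg.hasFDerivAt)
  rw [pd_of_hasFDerivAt this]; simp [pd_def]

lemma pd_mul {f g : (Fin 2 → ℝ) → ℝ} {x} (hf : DifferentiableAt ℝ f x)
    (hg : DifferentiableAt ℝ g x) (k : Fin 3) :
    pd k (fun y => f y * g y) x = pd k f x * g x + f x * pd k g x := by
  have := (hf.hasFDerivAt.fun_mul hg.hasFDerivAt)
  rw [pd_of_hasFDerivAt this]; simp [pd_def]; ring

lemma pd_const (c : ℝ) (x) (k : Fin 3) : pd k (fun _ => c) x = 0 := by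
  rw [pd_of_hasFDerivAt (hasFDerivAt_const c x)]; simp

lemma pd_sum {ι : Type*} (u : Finset ι) {f : ι → (Fin 2 → ℝ) → ℝ} {x}
    (hf : ∀ i ∈ u, DifferentiableAt ℝ (f i) x) (k : Fin 3) :
    pd k (fun y => ∑ i ∈ u, f i y) x = ∑ i ∈ u, pd k (f i) x := by
  have := HasFDerivAt.fun_sum (fun i hi => (hf i hi).hasFDerivAt)
  rw [pd_of_hasFDerivAt this]; simp [pd_def]

lemma pd_sq {f : (Fin 2 → ℝ) → ℝ} {x} (hf : DifferentiableAt ℝ f x) (k : Fin 3) :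
    pd k (fun y => f y ^ 2) x = 2 * f x * pd k f x := by
  have h : (fun y => f y ^ 2) = fun y => f y * f y := by funext y; ring
  rw [h, pd_mul hf hf]; ring

lemma pd_sqrt {f : (Fin 2 → ℝ) → ℝ} {x} (hf : DifferentiableAt ℝ f x) (hpos : 0 < f x) (k : Fin 3) :
    pd k (fun y => Real.sqrt (f y)) x = pd k f x / (2 * Real.sqrt (f x)) := by
  have := hf.hasFDerivAt.sqrt hpos.ne'
  rw [pd_of_hasFDerivAt this]; simp [pd_def]; ring

lemma pd_congr_nhds {f g : (Fin 2 → ℝ) → ℝ} {x} (h : f =ᶠ[nhds x] g) (k : Fin 3) :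
    pd k f x = pd k g x := by
  rw [pd_def, pd_def, h.fderiv_eq]

-- f differentiable at x with f x = 0, g continuous at x ⇒ f*g differentiable
lemma hasFDerivAt_mul_cont {f g : (Fin 2 → ℝ) → ℝ} {L : (Fin 2 → ℝ) →L[ℝ] ℝ} {x}
    (hf : HasFDerivAt f L x) (hf0 : f x = 0) (hg : ContinuousAt g x) :
    HasFDerivAt (fun y => f y * g y) (g x • L) x := by
  rw [hasFDerivAt_iff_isLittleO_nhds_zero] at hf ⊢
  simp only [hf0, zero_mul, zero_add] at hf ⊢
  have hgc : ContinuousAt (fun h : Fin 2 → ℝ => g (x + h)) 0 := by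
    have h2 : Tendsto (fun h : Fin 2 → ℝ => x + h) (nhds 0) (nhds x) := by
      simpa using (continuous_add_left x).tendsto (0 : Fin 2 → ℝ)
    simpa [ContinuousAt, Function.comp_def] using hg.tendsto.comp h2
  -- f(x+h)*g(x+h) - g x * L h = (f(x+h) - L h) * g(x+h) + (L h) * (g(x+h) - g x)
  have key : (fun h : Fin 2 → ℝ => f (x + h) * g (x + h) - (g x • L) h)
      = (fun h => (f (x + h) - L h) * g (x + h) + (L h) * (g (x + h) - g x)) := by
    funext h; simp [ContinuousLinearMap.smul_apply]; ring
  simp only [sub_zero] at hf ⊢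
  rw [key]
  have h1 : (fun h => (f (x + h) - L h) * g (x + h)) =o[nhds 0] (fun h : Fin 2 → ℝ => h) := by
    have hb : (fun h : Fin 2 → ℝ => g (x + h)) =O[nhds 0] (fun _ => (1 : ℝ)) :=
      hgc.isBigO_one ℝ
    have hf' : (fun h => f (x + h) - L h) =o[nhds 0] (fun h : Fin 2 → ℝ => ‖h‖) :=
      (isLittleO_norm_right).mpr hf
    have := hf'.mul_isBigO hb
    rw [← isLittleO_norm_right]
    simpa using this
  have h2 : (fun h => (L h) * (g (x + h) - g x)) =o[nhds 0] (fun h : Fin 2 → ℝ => h) := by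
    have hL : (fun h : Fin 2 → ℝ => L h) =O[nhds 0] (fun h : Fin 2 → ℝ => h) :=
      L.isBigO_comp _ _
    have hsm : (fun h : Fin 2 → ℝ => g (x + h) - g x) =o[nhds 0] (fun _ => (1 : ℝ)) := by
      rw [isLittleO_one_iff]
      have := hgc.tendsto
      simpa [ContinuousAt, sub_self] using (this.sub_const (g x))
    have hL' : (fun h : Fin 2 → ℝ => L h) =O[nhds 0] (fun h : Fin 2 → ℝ => ‖h‖) :=
      (isBigO_norm_right).mpr hL
    have := hL'.mul_isLittleO hsm
    rw [← isLittleO_norm_right]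
    simpa using this
  exact h1.add h2

-- differentiability of y ↦ pd k f y for C² functions
lemma pd_differentiableAt {f : (Fin 2 → ℝ) → ℝ} {x} (hf : ContDiffAt ℝ 2 f x) (k : Fin 3) :
    DifferentiableAt ℝ (fun y => fderiv ℝ f y v) x := by
  have h1 : ContDiffAt ℝ 1 (fderiv ℝ f) x := hf.fderiv_right (by norm_num)
  exact h1.differentiableAt one_ne_zero |>.clm_apply (differentiableAt_const v)

lemma pd_continuousAt {f : (Fin 2 → ℝ) → ℝ} {x} (hf : ContDiffAt ℝ 2 f x) (v : Fin 2 → ℝ) :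
    ContinuousAt (fun y => fderiv ℝ f y v) x := by
  have h1 : ContDiffAt ℝ 1 (fderiv ℝ f) x := hf.fderiv_right (by norm_num)
  exact ((h1.differentiableAt one_ne_zero).clm_apply (differentiableAt_const v)).continuousAt

lemma normv_nonneg (v : Fin 3 → ℝ) : 0 ≤ normv v := Real.sqrt_nonneg _

lemma normv_sq (v : Fin 3 → ℝ) : normv v ^ 2 = ∑ i, (v i) ^ 2 := by
  rw [normv, Real.sq_sqrt]; positivity

lemma normv_eq_zero {v : Fin 3 → ℝ} (h : normv v = 0) : ∀ k, v k = 0 := by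
  intro k
  have h2 : (∑ i, (v i)^2) = 0 := by rw [← normv_sq, h]; ring
  have := Finset.sum_eq_zero_iff_of_nonneg (fun i _ => sq_nonneg (v i)) |>.mp h2 k (Finset.mem_univ k)
  exact pow_eq_zero_iff (by norm_num) |>.mp this

lemma bc_parallel (lam : ℝ) (v : Fin 3 → ℝ) : ∃ c : ℝ, ∀ k, bc lam v k = c * v k := by
  by_cases h : normv v = 0
  · exact ⟨0, fun k => by simp [bc, h, normv_eq_zero h k]⟩
  · refine ⟨lam / (normv v)^2 * (1 - 2 * normv v / (Real.log (1 + normv v) - Real.log (1 - normv v))), fun k => ?_⟩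
    simp [bc, h]; ring

-- the log bounds: for 0 < r ≤ 1/2, |L - 2r| ≤ 4 r^3 where L = log(1+r) - log(1-r)
lemma log_bound {r : ℝ} (h0 : 0 < r) (h1 : r ≤ 1/2) :
    |Real.log (1 + r) - Real.log (1 - r) - 2 * r| ≤ 4 * r ^ 3 := by
  have hr1 : |r| < 1 := by rw [abs_of_pos h0]; linarith
  have hr1' : |(-r)| < 1 := by rw [abs_neg]; exact hr1
  have A := Real.abs_log_sub_add_sum_range_le hr1 3
  have B := Real.abs_log_sub_add_sum_range_le hr1' 3
  rw [abs_of_pos h0] at A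
  rw [abs_neg, abs_of_pos h0] at B
  simp only [Finset.sum_range_succ, Finset.sum_range_zero] at A B
  -- A : |r + r^2/2 + r^3/3 + log (1-r)| ≤ r^4/(1-r)
  -- B : |(-r) + r^2/2 - r^3/3 + log (1+r)| ≤ r^4/(1-r)
  have hden : r ^ 4 / (1 - r) ≤ r ^ 3 := by
    rw [div_le_iff₀ (by linarith)]
    nlinarith [pow_pos h0 3, pow_pos h0 4]
  rw [abs_le] at A B ⊢
  rw [sub_neg_eq_add] at B
  obtain ⟨A1, A2⟩ := A
  obtain ⟨B1, B2⟩ := B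
  norm_num at A1 A2 B1 B2
  constructor <;> nlinarith [A1, A2, B1, B2]

lemma L_pos {r : ℝ} (h0 : 0 < r) (h1 : r < 1) : 0 < Real.log (1 + r) - Real.log (1 - r) := by
  have := Real.log_lt_log (by linarith : (0:ℝ) < 1 - r) (by linarith : 1 - r < 1 + r)
  linarith

lemma bc_bound {lam : ℝ} (hlam : 0 < lam) {v : Fin 3 → ℝ} (h : normv v ≤ 1/2) (k : Fin 3) :
    |bc lam v k| ≤ 4 * lam * |v k| := by
  by_cases h0 : normv v = 0
  · simp [bc, h0]; positivity
  · have hr : 0 < normv v := lt_of_le_of_ne (normv_nonneg v) (Ne.symm h0)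
    have hlb := log_bound hr h
    set r := normv v with hrdef
    set L := Real.log (1 + r) - Real.log (1 - r) with hL
    have hLpos : 0 < L := L_pos hr (by linarith)
    have hrsq : r ^ 2 ≤ 1/4 := by nlinarith
    have hr3 : 4 * r ^ 3 ≤ r := by nlinarith [mul_le_mul_of_nonneg_left hrsq (le_of_lt hr)]
    have hLlow : r ≤ L := by
      rw [abs_le] at hlb
      nlinarith [hlb.1]
    have key : |1 - 2 * r / L| ≤ 4 * r ^ 2 := by
      have e1 : 1 - 2 * r / L = (L - 2 * r) / L := by field_simp
      rw [e1, abs_div, abs_of_pos hLpos]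
      calc |L - 2 * r| / L ≤ (4 * r ^ 3) / L := by gcongr
        _ ≤ (4 * r ^ 3) / r := by
            apply div_le_div_of_nonneg_left (by positivity) hr hLlow
        _ = 4 * r ^ 2 := by field_simp
    rw [bc, if_neg h0]
    have e2 : |lam * (v k / normv v ^ 2) * (1 - 2 * normv v / (Real.log (1 + normv v) - Real.log (1 - normv v)))| = lam * (|v k| / r ^ 2) * |1 - 2 * r / L| := by
      rw [abs_mul, abs_mul, abs_of_pos hlam, abs_div, abs_of_pos (pow_pos hr 2)]
    rw [e2]
    calc lam * (|v k| / r ^ 2) * |1 - 2 * r / L| ≤ lam * (|v k| / r ^ 2) * (4 * r ^ 2) := by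
          apply mul_le_mul_of_nonneg_left key (by positivity)
      _ = 4 * lam * |v k| := by field_simp

lemma continuous_normv : Continuous normv := by
  unfold normv
  exact Real.continuous_sqrt.comp (by continuity)

lemma bc_zero (lam : ℝ) (k : Fin 3) : bc lam 0 k = 0 := by
  have : normv 0 = 0 := by simp [normv]
  simp [bc, this]

lemma bc_continuousAt_zero {lam : ℝ} (hlam : 0 < lam) {w : (Fin 2 → ℝ) → Fin 3 → ℝ}
    {x : Fin 2 → ℝ} (hw : ContinuousAt w x) (h0 : w x = 0) (k : Fin 3) :
    ContinuousAt (fun y => bc lam (w y) k) x := by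
  have hval : bc lam (w x) k = 0 := by rw [h0, bc_zero]
  rw [ContinuousAt, hval]
  have hnv : Tendsto (fun y => normv (w y)) (nhds x) (nhds 0) := by
    have := (continuous_normv.continuousAt).comp hw
    simpa [Function.comp_def, h0, show normv 0 = 0 by simp [normv]] using this.tendsto
  have hev : ∀ᶠ y in nhds x, ‖bc lam (w y) k‖ ≤ 4 * lam * |w y k| := by
    filter_upwards [hnv.eventually (eventually_le_nhds (by norm_num : (0:ℝ) < 1/2))] with y hy
    exact bc_bound hlam hy k
  apply squeeze_zero_norm' hev
  have hwk : Tendsto (fun y => w y k) (nhds x) (nhds 0) := by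
    have : ContinuousAt (fun y => w y k) x := (continuous_apply k).continuousAt.comp hw
    simpa [Function.comp, h0] using this.tendsto
  have : Tendsto (fun y => 4 * lam * |w y k|) (nhds x) (nhds (4 * lam * |(0:ℝ)|)) :=
    (tendsto_const_nhds.mul (hwk.abs))
  simpa using this

lemma bc_differentiableAt_ne {lam : ℝ} {w : (Fin 2 → ℝ) → Fin 3 → ℝ} {x : Fin 2 → ℝ}
    (hw : ∀ i, DifferentiableAt ℝ (fun y => w y i) x)
    (h0 : normv (w x) ≠ 0) (h1 : normv (w x) < 1) (k : Fin 3) :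
    DifferentiableAt ℝ (fun y => bc lam (w y) k) x := by
  have hwc : ContinuousAt w x := by
    rw [continuousAt_pi]; intro i; exact (hw i).continuousAt
  have hr0 : 0 < normv (w x) := lt_of_le_of_ne (normv_nonneg _) (Ne.symm h0)
  have hS : 0 < ∑ i, (w x i) ^ 2 := by
    by_contra hc
    push_neg at hc
    exact h0 (by rw [normv]; exact Real.sqrt_eq_zero'.mpr hc)
  have hSd : DifferentiableAt ℝ (fun y => ∑ i, (w y i) ^ 2) x := by
    apply DifferentiableAt.fun_sum; intro i _; exact ((hw i).pow 2)
  have hrd : DifferentiableAt ℝ (fun y => normv (w y)) x := by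
    have : (fun y => normv (w y)) = fun y => Real.sqrt (∑ i, (w y i) ^ 2) := rfl
    rw [this]
    exact hSd.sqrt hS.ne'
  have hrc : ContinuousAt (fun y => normv (w y)) x := hrd.continuousAt
  have hlog1 : DifferentiableAt ℝ (fun y => Real.log (1 + normv (w y))) x := by
    apply DifferentiableAt.log ((differentiableAt_const 1).add hrd)
    exact (by linarith [normv_nonneg (w x)] : (0:ℝ) < 1 + normv (w x)).ne'
  have hlog2 : DifferentiableAt ℝ (fun y => Real.log (1 - normv (w y))) x := by
    apply DifferentiableAt.log ((differentiableAt_const 1).sub hrd)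
    have : (0:ℝ) < 1 - normv (w x) := by linarith
    exact this.ne'
  have hL : DifferentiableAt ℝ
      (fun y => Real.log (1 + normv (w y)) - Real.log (1 - normv (w y))) x :=
    hlog1.sub hlog2
  have hLne : Real.log (1 + normv (w x)) - Real.log (1 - normv (w x)) ≠ 0 :=
    (L_pos hr0 h1).ne'
  have hF : DifferentiableAt ℝ (fun y => lam * (w y k / (normv (w y)) ^ 2) *
      (1 - 2 * normv (w y) / (Real.log (1 + normv (w y)) - Real.log (1 - normv (w y))))) x := by
    have hq : DifferentiableAt ℝ (fun y => w y k / (normv (w y)) ^ 2) x := by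
      simp only [div_eq_mul_inv]
      exact (hw k).mul ((hrd.pow 2).inv (pow_ne_zero 2 h0))
    have hnum : DifferentiableAt ℝ (fun y => 2 * normv (w y)) x :=
      (differentiableAt_const 2).mul hrd
    have hquot : DifferentiableAt ℝ (fun y => 2 * normv (w y) /
        (Real.log (1 + normv (w y)) - Real.log (1 - normv (w y)))) x := by
      simp only [div_eq_mul_inv]
      exact hnum.mul (hL.inv hLne)
    exact ((differentiableAt_const lam).mul hq).mul ((differentiableAt_const 1).sub hquot)
  apply hF.congr_of_eventuallyEq
  have hev : ∀ᶠ y in nhds x, normv (w y) ≠ 0 := by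
    have := hrc.eventually_ne h0
    exact this
  filter_upwards [hev] with y hy
  simp [bc, hy]


end Aux
section Aux2
open Filter Asymptotics

lemma pd_diff2 {f : (Fin 2 → ℝ) → ℝ} {x} (hf : ContDiffAt ℝ 2 f x) (k : Fin 3) :
    DifferentiableAt ℝ (fun y => pd k f y) x := by
  unfold pd
  exact pd_differentiableAt hf k

lemma pd_cont2 {f : (Fin 2 → ℝ) → ℝ} {x} (hf : ContDiffAt ℝ 2 f x) (k : Fin 3) :
    ContinuousAt (fun y => pd k f y) x := by
  unfold pd
  exact pd_continuousAt hf _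

lemma normv_div (v : Fin 3 → ℝ) (d : ℝ) (hd : 0 < d) :
    normv (fun i => v i / d) = normv v / d := by
  unfold normv
  rw [show (∑ i, (v i / d) ^ 2) = (∑ i, (v i) ^ 2) / d ^ 2 by
    rw [Finset.sum_div]; congr 1; funext i; ring]
  rw [Real.sqrt_div (by positivity) _, Real.sqrt_sq hd.le]

lemma contracted_J (lam : ℝ) (n₀ V : ((Fin 2 → ℝ) × ℝ) → ℝ)
    (n : ((Fin 2 → ℝ) × ℝ) → Fin 3 → ℝ) (s : Fin 2) (t : ℝ) (y : Fin 2 → ℝ)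
    (c : ℝ) (hc : ∀ k : Fin 3, bc lam (fun i => n (y, t) i / n₀ (y, t)) k = c * n (y, t) k) :
    (∑ j, n (y, t) j * Jflux lam n₀ V n j s t y)
      = (∑ j, n (y, t) j * pd s.castSucc (fun z => n (z, t) j) y)
        + (∑ j, (n (y, t) j) ^ 2) * pd s.castSucc (fun z => V (z, t)) y := by
  fin_cases s <;>
  · simp only [Jflux, Fin.sum_univ_three, hc, eta, kd, Fin.isValue]
    norm_num [show (Fin.castAdd 1 (0:Fin 2)) = (0:Fin 3) from rfl,
      show (Fin.castAdd 1 (1:Fin 2)) = (1:Fin 3) from rfl]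
    ring

end Aux2
section Aux3

lemma psi_pd_rel {F : Fin 3 → (Fin 2 → ℝ) → ℝ} {y : Fin 2 → ℝ}
    (hF : ∀ j, DifferentiableAt ℝ (F j) y) (k : Fin 3) :
    Real.sqrt (1 + ∑ j, F j y ^ 2) * pd k (fun z => Real.sqrt (1 + ∑ j, F j z ^ 2)) y
      = ∑ j, F j y * pd k (F j) y := by
  have hsum : DifferentiableAt ℝ (fun z => ∑ j, F j z ^ 2) y :=
    DifferentiableAt.fun_sum fun j _ => (hF j).pow 2
  have harg : DifferentiableAt ℝ (fun z => 1 + ∑ j, F j z ^ 2) y :=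
    (differentiableAt_const 1).add hsum
  have h0 : (0:ℝ) < 1 + ∑ j, F j y ^ 2 := by positivity
  have h1 : pd k (fun z => Real.sqrt (1 + ∑ j, F j z ^ 2)) y
      = pd k (fun z => 1 + ∑ j, F j z ^ 2) y / (2 * Real.sqrt (1 + ∑ j, F j y ^ 2)) :=
    pd_sqrt harg h0 k
  have h2 : pd k (fun z : Fin 2 → ℝ => (1:ℝ) + ∑ j, F j z ^ 2) y
      = pd k (fun _ => (1:ℝ)) y + pd k (fun z => ∑ j, F j z ^ 2) y :=
    pd_add (differentiableAt_const 1) hsum k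
  have h3 : pd k (fun z => ∑ j, F j z ^ 2) y = ∑ j, pd k (fun z => F j z ^ 2) y :=
    pd_sum Finset.univ (fun j _ => (hF j).pow 2) k
  have h4 : ∀ j : Fin 3, pd k (fun z => F j z ^ 2) y = 2 * F j y * pd k (F j) y :=
    fun j => pd_sq (hF j) k
  rw [h1, h2, h3, pd_const, Finset.sum_congr rfl (fun j _ => h4 j), zero_add]
  have hs : Real.sqrt (1 + ∑ j, F j y ^ 2) ≠ 0 := (Real.sqrt_pos.mpr h0).ne'
  field_simp
  rw [Finset.mul_sum]
  exact Finset.sum_congr rfl fun j _ => by ring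

lemma psi_deriv_rel {F : Fin 3 → ℝ → ℝ} {t : ℝ} (hF : ∀ j, DifferentiableAt ℝ (F j) t) :
    Real.sqrt (1 + ∑ j, F j t ^ 2) * deriv (fun τ => Real.sqrt (1 + ∑ j, F j τ ^ 2)) t
      = ∑ j, F j t * deriv (F j) t := by
  have hD : HasDerivAt (fun τ => 1 + ∑ j, F j τ ^ 2) (∑ j, 2 * F j t * deriv (F j) t) t := by
    have h1 : HasDerivAt (fun τ => ∑ j, F j τ ^ 2) (∑ j, 2 * F j t * deriv (F j) t) t := by
      apply HasDerivAt.fun_sum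
      intro j _
      have h2 := ((hF j).hasDerivAt).fun_pow 2
      exact h2.congr_deriv (by norm_num)
    simpa using (hasDerivAt_const t (1:ℝ)).fun_add h1
  have h0 : (0:ℝ) < 1 + ∑ j, F j t ^ 2 := by positivity
  have hs := hD.sqrt h0.ne'
  rw [hs.deriv]
  have hne : Real.sqrt (1 + ∑ j, F j t ^ 2) ≠ 0 := (Real.sqrt_pos.mpr h0).ne'
  field_simp
  rw [Finset.mul_sum]
  exact Finset.sum_congr rfl fun j _ => by ring

lemma catSum {ι : Type*} (u : Finset ι) {E : Type*} [TopologicalSpace E]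
    {f : ι → E → ℝ} {x : E} (h : ∀ i ∈ u, ContinuousAt (f i) x) :
    ContinuousAt (fun y => ∑ i ∈ u, f i y) x :=
  tendsto_finset_sum u h

end Aux3
set_option maxHeartbeats 4000000
/-- Let `Ω ⊆ ℝ²` be open, `T > 0`, and `n₀, V, n` smooth on `Ω × (0,T)` with
`n₀ > 0` and `|n|/n₀ < 1` pointwise. If `n` satisfies the QSDE1 spin equations
pointwise, then `ψ = √(1+|n|²)` satisfies pointwise
`∂_t ψ − div(∇ψ + ψ∇V) = −ψ⁻¹ ΔV − ψ⁻¹ (G[n] − |∇ψ|²)`, with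
`G[n] − |∇ψ|² ≥ 0`. -/
theorem psi_equation (Ω : Set (Fin 2 → ℝ)) (hΩ : IsOpen Ω) (T : ℝ) (hT : 0 < T)
    (lam : ℝ) (hlam : 0 < lam)
    (n₀ V : ((Fin 2 → ℝ) × ℝ) → ℝ) (n : ((Fin 2 → ℝ) × ℝ) → Fin 3 → ℝ)
    (hsm₀ : ContDiffOn ℝ (⊤ : ℕ∞) n₀ (Ω ×ˢ Set.Ioo 0 T))
    (hsmV : ContDiffOn ℝ (⊤ : ℕ∞) V (Ω ×ˢ Set.Ioo 0 T))
    (hsmn : ContDiffOn ℝ (⊤ : ℕ∞) n (Ω ×ˢ Set.Ioo 0 T))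
    (hpos : ∀ x ∈ Ω, ∀ t ∈ Set.Ioo (0 : ℝ) T, 0 < n₀ (x, t))
    (hlt : ∀ x ∈ Ω, ∀ t ∈ Set.Ioo (0 : ℝ) T, normv (n (x, t)) / n₀ (x, t) < 1)
    (hspin : ∀ x ∈ Ω, ∀ t ∈ Set.Ioo (0 : ℝ) T, SpinEqs lam n₀ V n x t) :
    ∀ x ∈ Ω, ∀ t ∈ Set.Ioo (0 : ℝ) T,
      (deriv (fun τ => Real.sqrt (1 + ∑ j, (n (x, τ) j) ^ 2)) t
          - (∑ s : Fin 2, pd s.castSucc (fun y =>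
                pd s.castSucc (fun z => Real.sqrt (1 + ∑ j, (n (z, t) j) ^ 2)) y
                  + Real.sqrt (1 + ∑ j, (n (y, t) j) ^ 2)
                      * pd s.castSucc (fun z => V (z, t)) y) x)
        = -(Real.sqrt (1 + ∑ j, (n (x, t) j) ^ 2))⁻¹
              * (∑ s : Fin 2, pd s.castSucc (fun y => pd s.castSucc (fun z => V (z, t)) y) x)
          - (Real.sqrt (1 + ∑ j, (n (x, t) j) ^ 2))⁻¹
              * (Gfun (fun y => n (y, t)) x
                  - ∑ s : Fin 2,
                      (pd s.castSucc (fun y => Real.sqrt (1 + ∑ j, (n (y, t) j) ^ 2)) x) ^ 2))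
      ∧ 0 ≤ Gfun (fun y => n (y, t)) x
            - ∑ s : Fin 2,
                (pd s.castSucc (fun y => Real.sqrt (1 + ∑ j, (n (y, t) j) ^ 2)) x) ^ 2 := by
  intro x hx t ht
  have hopen : IsOpen (Ω ×ˢ Set.Ioo (0:ℝ) T) := hΩ.prod isOpen_Ioo
  have hn0pos : 0 < n₀ (x, t) := hpos x hx t ht
  -- spatial slice smoothness
  have hNy : ∀ (j : Fin 3), ∀ y ∈ Ω, ContDiffAt ℝ 2 (fun z => n (z, t) j) y := by
    intro j y hy
    have h1 : ContDiffAt ℝ ((⊤ : ℕ∞) : WithTop ℕ∞) n (y, t) :=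
      hsmn.contDiffAt (hopen.mem_nhds ⟨hy, ht⟩)
    have h2 : ContDiffAt ℝ ((⊤ : ℕ∞) : WithTop ℕ∞)
        (fun z : Fin 2 → ℝ => ((z, t) : (Fin 2 → ℝ) × ℝ)) y :=
      (contDiff_id.prodMk contDiff_const).contDiffAt
    have h4 : ContDiffAt ℝ ((⊤ : ℕ∞) : WithTop ℕ∞) (fun z : Fin 2 → ℝ => n (z, t) j) y :=
      ((ContinuousLinearMap.proj j : (Fin 3 → ℝ) →L[ℝ] ℝ).contDiff.contDiffAt).comp y
        (h1.comp y h2)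
    exact h4.of_le (WithTop.coe_le_coe.mpr le_top)
  have hWy : ∀ y ∈ Ω, ContDiffAt ℝ 2 (fun z => V (z, t)) y := by
    intro y hy
    have h1 : ContDiffAt ℝ ((⊤ : ℕ∞) : WithTop ℕ∞) V (y, t) :=
      hsmV.contDiffAt (hopen.mem_nhds ⟨hy, ht⟩)
    have h2 : ContDiffAt ℝ ((⊤ : ℕ∞) : WithTop ℕ∞)
        (fun z : Fin 2 → ℝ => ((z, t) : (Fin 2 → ℝ) × ℝ)) y :=
      (contDiff_id.prodMk contDiff_const).contDiffAt
    exact (h1.comp y h2).of_le (WithTop.coe_le_coe.mpr le_top)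
  have hN0y : ∀ y ∈ Ω, ContDiffAt ℝ 2 (fun z => n₀ (z, t)) y := by
    intro y hy
    have h1 : ContDiffAt ℝ ((⊤ : ℕ∞) : WithTop ℕ∞) n₀ (y, t) :=
      hsm₀.contDiffAt (hopen.mem_nhds ⟨hy, ht⟩)
    have h2 : ContDiffAt ℝ ((⊤ : ℕ∞) : WithTop ℕ∞)
        (fun z : Fin 2 → ℝ => ((z, t) : (Fin 2 → ℝ) × ℝ)) y :=
      (contDiff_id.prodMk contDiff_const).contDiffAt
    exact (h1.comp y h2).of_le (WithTop.coe_le_coe.mpr le_top)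
  -- time slice smoothness
  have hNt : ∀ j : Fin 3, DifferentiableAt ℝ (fun τ => n (x, τ) j) t := by
    intro j
    have h1 : ContDiffAt ℝ ((⊤ : ℕ∞) : WithTop ℕ∞) n (x, t) :=
      hsmn.contDiffAt (hopen.mem_nhds ⟨hx, ht⟩)
    have h2 : ContDiffAt ℝ ((⊤ : ℕ∞) : WithTop ℕ∞) (fun τ : ℝ => ((x, τ) : (Fin 2 → ℝ) × ℝ)) t :=
      (contDiff_const.prodMk contDiff_id).contDiffAt
    have h4 : ContDiffAt ℝ ((⊤ : ℕ∞) : WithTop ℕ∞) (fun τ : ℝ => n (x, τ) j) t :=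
      ((ContinuousLinearMap.proj j : (Fin 3 → ℝ) →L[ℝ] ℝ).contDiff.contDiffAt).comp t
        (h1.comp t h2)
    exact (h4.of_le (by simp) : ContDiffAt ℝ 1 _ t).differentiableAt one_ne_zero
  -- differentiability shortcuts
  have hNd : ∀ (j : Fin 3), ∀ y ∈ Ω, DifferentiableAt ℝ (fun z => n (z, t) j) y :=
    fun j y hy => (hNy j y hy).differentiableAt two_ne_zero
  have hWd : ∀ y ∈ Ω, DifferentiableAt ℝ (fun z => V (z, t)) y :=
    fun y hy => (hWy y hy).differentiableAt two_ne_zero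
  have hN0d : DifferentiableAt ℝ (fun z => n₀ (z, t)) x :=
    (hN0y x hx).differentiableAt two_ne_zero
  -- ψ
  set ψ : (Fin 2 → ℝ) → ℝ := fun z => Real.sqrt (1 + ∑ j, n (z, t) j ^ 2) with hψdef
  have hargpos : ∀ y : Fin 2 → ℝ, 0 < 1 + ∑ j, n (y, t) j ^ 2 := fun y => by positivity
  have hargy : ∀ y ∈ Ω, ContDiffAt ℝ 2 (fun z : Fin 2 → ℝ => 1 + ∑ j, n (z, t) j ^ 2) y := by
    intro y hy
    exact contDiffAt_const.add (ContDiffAt.sum fun j _ => (hNy j y hy).pow 2)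
  have hψy : ∀ y ∈ Ω, ContDiffAt ℝ 2 ψ y :=
    fun y hy => ((hargy y hy).sqrt (hargpos y).ne')
  have hψd : ∀ y ∈ Ω, DifferentiableAt ℝ ψ y :=
    fun y hy => (hψy y hy).differentiableAt two_ne_zero
  have hψpos : ∀ y : Fin 2 → ℝ, 0 < ψ y := fun y => Real.sqrt_pos.mpr (hargpos y)
  have hψsq : ∀ y : Fin 2 → ℝ, (ψ y) ^ 2 = 1 + ∑ j, n (y, t) j ^ 2 :=
    fun y => Real.sq_sqrt (hargpos y).le
  -- pd of ψ
  have hrel : ∀ (k : Fin 3), ∀ y ∈ Ω,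
      ψ y * pd k ψ y = ∑ j, n (y, t) j * pd k (fun z => n (z, t) j) y :=
    fun k y hy => psi_pd_rel (F := fun j z => n (z, t) j) (fun j => hNd j y hy) k
  -- time derivative
  have hT1 : ψ x * deriv (fun τ => Real.sqrt (1 + ∑ j, n (x, τ) j ^ 2)) t
      = ∑ j, n (x, t) j * deriv (fun τ => n (x, τ) j) t :=
    psi_deriv_rel (F := fun j τ => n (x, τ) j) hNt
  -- differentiability of w = n/n₀
  have hwdiff : ∀ i : Fin 3, DifferentiableAt ℝ (fun y => n (y, t) i / n₀ (y, t)) x := by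
    intro i
    simp only [div_eq_mul_inv]
    exact (hNd i x hx).mul (hN0d.inv hn0pos.ne')
  -- product-rule identity (the analytic core), case split on n(x,t) = 0
  have hPR : ∀ s : Fin 2,
      pd s.castSucc (fun y => ∑ j, n (y, t) j * Jflux lam n₀ V n j s t y) x
        = ∑ j : Fin 3, (pd s.castSucc (fun z => n (z, t) j) x * Jflux lam n₀ V n j s t x
            + n (x, t) j * pd s.castSucc (fun y => Jflux lam n₀ V n j s t y) x) := by
    intro s
    by_cases hz : ∀ j : Fin 3, n (x, t) j = 0
    · -- zero case: use continuity of the flux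
      have hw0 : (fun i => n (x, t) i / n₀ (x, t)) = (0 : Fin 3 → ℝ) :=
        funext fun i => by rw [hz i]; simp
      have hwc : ContinuousAt (fun y => fun i => n (y, t) i / n₀ (y, t)) x :=
        continuousAt_pi.mpr fun i => (hwdiff i).continuousAt
      have hBc : ∀ k : Fin 3,
          ContinuousAt (fun y => bc lam (fun i => n (y, t) i / n₀ (y, t)) k) x :=
        fun k => bc_continuousAt_zero hlam hwc hw0 k
      have hJc : ∀ j : Fin 3, ContinuousAt (fun y => Jflux lam n₀ V n j s t y) x := by
        intro j
        simp only [Jflux]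
        apply ContinuousAt.add
        apply ContinuousAt.sub
        apply ContinuousAt.add
        · exact catSum Finset.univ fun l _ =>
            ((continuousAt_const.add (catSum Finset.univ fun k _ =>
              ((hBc k).mul continuousAt_const))).mul
                ((pd_cont2 (hNy l x hx) s.castSucc)))
        · exact ((hNd j x hx).continuousAt).mul (pd_cont2 (hWy x hx) s.castSucc)
        · exact continuousAt_const.mul (catSum Finset.univ fun l _ =>
            continuousAt_const.mul (hNd l x hx).continuousAt)
        · exact catSum Finset.univ fun k _ => (hBc k).mul
            ((continuousAt_const.mul (hNd s.castSucc x hx).continuousAt).sub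
              (continuousAt_const.mul (hNd k x hx).continuousAt))
      have hHD : ∀ j : Fin 3, HasFDerivAt (fun y => n (y, t) j * Jflux lam n₀ V n j s t y)
          ((Jflux lam n₀ V n j s t x) • fderiv ℝ (fun z => n (z, t) j) x) x := by
        intro j
        have h := hasFDerivAt_mul_cont (hNd j x hx).hasFDerivAt (hz j) (hJc j)
        exact h
      have hS := HasFDerivAt.fun_sum (fun j (_ : j ∈ Finset.univ) => hHD j)
      have hpd := pd_of_hasFDerivAt hS s.castSucc
      rw [show pd s.castSucc (fun y => ∑ j, n (y, t) j * Jflux lam n₀ V n j s t y) x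
          = (∑ j : Fin 3, (Jflux lam n₀ V n j s t x) • fderiv ℝ (fun z => n (z, t) j) x)
              (ev s.castSucc) from hpd]
      rw [ContinuousLinearMap.sum_apply]
      refine Finset.sum_congr rfl (fun j _ => ?_)
      rw [ContinuousLinearMap.smul_apply, hz j, zero_mul, add_zero, smul_eq_mul]
      rw [show fderiv ℝ (fun z => n (z, t) j) x (ev s.castSucc)
          = pd s.castSucc (fun z => n (z, t) j) x from rfl]
      ring
    · -- nonzero case: the flux is differentiable
      have hnx : normv (n (x, t)) ≠ 0 := by
        intro h
        exact hz fun j => normv_eq_zero h j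
      have hwnv : normv (fun i => n (x, t) i / n₀ (x, t)) = normv (n (x, t)) / n₀ (x, t) :=
        normv_div _ _ hn0pos
      have h1 : normv (fun i => n (x, t) i / n₀ (x, t)) ≠ 0 := by
        rw [hwnv]; exact div_ne_zero hnx hn0pos.ne'
      have h2 : normv (fun i => n (x, t) i / n₀ (x, t)) < 1 := by
        rw [hwnv]; exact hlt x hx t ht
      have hBd : ∀ k : Fin 3,
          DifferentiableAt ℝ (fun y => bc lam (fun i => n (y, t) i / n₀ (y, t)) k) x :=
        fun k => bc_differentiableAt_ne hwdiff h1 h2 k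
      have hJd : ∀ j : Fin 3, DifferentiableAt ℝ (fun y => Jflux lam n₀ V n j s t y) x := by
        intro j
        simp only [Jflux]
        apply DifferentiableAt.add
        apply DifferentiableAt.sub
        apply DifferentiableAt.add
        · exact DifferentiableAt.fun_sum fun l _ =>
            (((differentiableAt_const _).add (DifferentiableAt.fun_sum fun k _ =>
              ((hBd k).mul (differentiableAt_const _)))).mul
                ((pd_diff2 (hNy l x hx) s.castSucc)))
        · exact (hNd j x hx).mul (pd_diff2 (hWy x hx) s.castSucc)
        · exact (differentiableAt_const 2).mul (DifferentiableAt.fun_sum fun l _ =>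
            (differentiableAt_const _).mul (hNd l x hx))
        · exact DifferentiableAt.fun_sum fun k _ => (hBd k).mul
            (((differentiableAt_const _).mul (hNd s.castSucc x hx)).sub
              ((differentiableAt_const _).mul (hNd k x hx)))
      have hsum : pd s.castSucc (fun y => ∑ j, (fun (j : Fin 3) (y : Fin 2 → ℝ) =>
          n (y, t) j * Jflux lam n₀ V n j s t y) j y) x
          = ∑ j : Fin 3, pd s.castSucc ((fun (j : Fin 3) (y : Fin 2 → ℝ) =>
              n (y, t) j * Jflux lam n₀ V n j s t y) j) x :=
        pd_sum Finset.univ (fun j _ => (hNd j x hx).mul (hJd j)) s.castSucc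
      rw [show pd s.castSucc (fun y => ∑ j, n (y, t) j * Jflux lam n₀ V n j s t y) x
          = ∑ j : Fin 3, pd s.castSucc (fun y =>
              n (y, t) j * Jflux lam n₀ V n j s t y) x from hsum]
      exact Finset.sum_congr rfl fun j _ => pd_mul (hNd j x hx) (hJd j) s.castSucc
  -- the contracted identity differentiated
  have hDC : ∀ s : Fin 2,
      pd s.castSucc (fun y => ∑ j, n (y, t) j * Jflux lam n₀ V n j s t y) x
        = pd s.castSucc ψ x * (pd s.castSucc ψ x + ψ x * pd s.castSucc (fun z => V (z, t)) x)
          + ψ x * pd s.castSucc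
              (fun y => pd s.castSucc ψ y + ψ y * pd s.castSucc (fun z => V (z, t)) y) x
          - pd s.castSucc (fun y => pd s.castSucc (fun z => V (z, t)) y) x := by
    intro s
    have hI1 : ∀ y ∈ Ω, (∑ j, n (y, t) j * Jflux lam n₀ V n j s t y)
        = ψ y * (pd s.castSucc ψ y + ψ y * pd s.castSucc (fun z => V (z, t)) y)
          - pd s.castSucc (fun z => V (z, t)) y := by
      intro y hy
      obtain ⟨cy, hcy⟩ := bc_parallel lam (fun i => n (y, t) i / n₀ (y, t))
      have hcy' : ∀ k : Fin 3, bc lam (fun i => n (y, t) i / n₀ (y, t)) k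
          = (cy / n₀ (y, t)) * n (y, t) k := fun k => by rw [hcy k]; ring
      rw [contracted_J lam n₀ V n s t y _ hcy']
      have e1 := hrel s.castSucc y hy
      have e2 : ψ y ^ 2 = 1 + ∑ j, n (y, t) j ^ 2 := hψsq y
      linear_combination (-1 : ℝ) * e1 - pd s.castSucc (fun z => V (z, t)) y * e2
    have hev : (fun y => ∑ j, n (y, t) j * Jflux lam n₀ V n j s t y)
        =ᶠ[nhds x] (fun y => ψ y * (pd s.castSucc ψ y + ψ y * pd s.castSucc (fun z => V (z, t)) y)
          - pd s.castSucc (fun z => V (z, t)) y) :=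
      Filter.eventuallyEq_of_mem (hΩ.mem_nhds hx) hI1
    rw [pd_congr_nhds hev s.castSucc]
    have hΦd : DifferentiableAt ℝ
        (fun y => pd s.castSucc ψ y + ψ y * pd s.castSucc (fun z => V (z, t)) y) x :=
      (pd_diff2 (hψy x hx) _).add ((hψd x hx).mul (pd_diff2 (hWy x hx) _))
    have hpdWd := pd_diff2 (hWy x hx) s.castSucc
    have h1 : pd s.castSucc (fun y =>
        (fun y => ψ y * (pd s.castSucc ψ y + ψ y * pd s.castSucc (fun z => V (z, t)) y)) y
          - (fun y => pd s.castSucc (fun z => V (z, t)) y) y) x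
        = pd s.castSucc (fun y => ψ y * (pd s.castSucc ψ y + ψ y * pd s.castSucc (fun z => V (z, t)) y)) x
          - pd s.castSucc (fun y => pd s.castSucc (fun z => V (z, t)) y) x :=
      pd_sub ((hψd x hx).mul hΦd) hpdWd s.castSucc
    have h2 : pd s.castSucc (fun y =>
        ψ y * (fun y => pd s.castSucc ψ y + ψ y * pd s.castSucc (fun z => V (z, t)) y) y) x
        = pd s.castSucc ψ x * (pd s.castSucc ψ x + ψ x * pd s.castSucc (fun z => V (z, t)) x)
          + ψ x * pd s.castSucc
              (fun y => pd s.castSucc ψ y + ψ y * pd s.castSucc (fun z => V (z, t)) y) x :=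
      pd_mul (hψd x hx) hΦd s.castSucc
    rw [show pd s.castSucc (fun y => ψ y * (pd s.castSucc ψ y
        + ψ y * pd s.castSucc (fun z => V (z, t)) y)
        - pd s.castSucc (fun z => V (z, t)) y) x
      = pd s.castSucc (fun y => ψ y * (pd s.castSucc ψ y + ψ y * pd s.castSucc (fun z => V (z, t)) y)) x
          - pd s.castSucc (fun y => pd s.castSucc (fun z => V (z, t)) y) x from h1]
    rw [show pd s.castSucc (fun y => ψ y * (pd s.castSucc ψ y
        + ψ y * pd s.castSucc (fun z => V (z, t)) y)) x
      = pd s.castSucc ψ x * (pd s.castSucc ψ x + ψ x * pd s.castSucc (fun z => V (z, t)) x)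
          + ψ x * pd s.castSucc
              (fun y => pd s.castSucc ψ y + ψ y * pd s.castSucc (fun z => V (z, t)) y) x from h2]
  -- combined key identity
  have hKEY : ∀ s : Fin 2,
      (∑ j, n (x, t) j * pd s.castSucc (fun y => Jflux lam n₀ V n j s t y) x)
        = pd s.castSucc ψ x * (pd s.castSucc ψ x + ψ x * pd s.castSucc (fun z => V (z, t)) x)
          + ψ x * pd s.castSucc
              (fun y => pd s.castSucc ψ y + ψ y * pd s.castSucc (fun z => V (z, t)) y) x
          - pd s.castSucc (fun y => pd s.castSucc (fun z => V (z, t)) y) x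
          - ∑ j, pd s.castSucc (fun z => n (z, t) j) x * Jflux lam n₀ V n j s t x := by
    intro s
    have h1 := hDC s
    have h2 := hPR s
    rw [Finset.sum_add_distrib] at h2
    linarith [h1, h2]
  -- ======== final assembly ========
  obtain ⟨cx, hcx0⟩ := bc_parallel lam (fun i => n (x, t) i / n₀ (x, t))
  have hcx : ∀ k : Fin 3, bc lam (fun i => n (x, t) i / n₀ (x, t)) k
      = (cx / n₀ (x, t)) * n (x, t) k := fun k => by rw [hcx0 k]; ring
  have hsp := hspin x hx t ht
  unfold SpinEqs at hsp
  have hs0 := hsp 0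
  have hs1 := hsp 1
  have hs2 := hsp 2
  have hK0 := hKEY 0
  have hK1 := hKEY 1
  have hr0 := hrel ((0 : Fin 2).castSucc) x hx
  have hr1 := hrel ((1 : Fin 2).castSucc) x hx
  have hψs := hψsq x
  have hψp := hψpos x
  have hmain : ψ x * (deriv (fun τ => Real.sqrt (1 + ∑ j, n (x, τ) j ^ 2)) t
        - ∑ s : Fin 2, pd s.castSucc
            (fun y => pd s.castSucc ψ y + ψ y * pd s.castSucc (fun z => V (z, t)) y) x)
      = -(∑ s : Fin 2, pd s.castSucc (fun y => pd s.castSucc (fun z => V (z, t)) y) x)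
        - (Gfun (fun y => n (y, t)) x - ∑ s : Fin 2, (pd s.castSucc ψ x) ^ 2) := by
    simp only [Jflux, Fsrc, Gfun, curl3, Fin.sum_univ_three, Fin.sum_univ_two, hcx,
      pd_two, Fin.castSucc_zero, Fin.castSucc_one, Matrix.cons_val_zero, Matrix.cons_val_one,
      Matrix.head_cons, Matrix.cons_val_two, Matrix.tail_cons, eta, kd]
      at hs0 hs1 hs2 hK0 hK1 hT1 hr0 hr1 ⊢
    norm_num at hs0 hs1 hs2 hK0 hK1 hT1 hr0 hr1 ⊢
    linear_combination hT1 + n (x, t) 0 * hs0 + n (x, t) 1 * hs1 + n (x, t) 2 * hs2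
      + hK0 + hK1 + pd 0 (fun z => V (z, t)) x * hr0 + pd 1 (fun z => V (z, t)) x * hr1
  have hψne : ψ x ≠ 0 := (hψpos x).ne'
  have hval : ∀ y : Fin 2 → ℝ, Real.sqrt (1 + ∑ j, n (y, t) j ^ 2) = ψ y := fun _ => rfl
  constructor
  · -- the equation
    simp only [hval]
    have hstep : deriv (fun τ => Real.sqrt (1 + ∑ j, n (x, τ) j ^ 2)) t
        - ∑ s : Fin 2, pd s.castSucc
            (fun y => pd s.castSucc ψ y + ψ y * pd s.castSucc (fun z => V (z, t)) y) x
        = (ψ x)⁻¹ * (-(∑ s : Fin 2, pd s.castSucc (fun y => pd s.castSucc (fun z => V (z, t)) y) x)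
            - (Gfun (fun y => n (y, t)) x - ∑ s : Fin 2, (pd s.castSucc ψ x) ^ 2)) := by
      rw [← hmain]
      field_simp
    rw [hstep]
    ring
  · -- the inequality
    simp only [Fin.sum_univ_three, Fin.castSucc_zero, Fin.castSucc_one] at hr0 hr1 hψs
    have hApos : (0:ℝ) < 1 + (n (x, t) 0 ^ 2 + n (x, t) 1 ^ 2 + n (x, t) 2 ^ 2) := by positivity
    have hq0' : (1 + (n (x, t) 0 ^ 2 + n (x, t) 1 ^ 2 + n (x, t) 2 ^ 2)) * pd 0 ψ x ^ 2
        = (n (x, t) 0 * pd 0 (fun z => n (z, t) 0) x + n (x, t) 1 * pd 0 (fun z => n (z, t) 1) x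
            + n (x, t) 2 * pd 0 (fun z => n (z, t) 2) x) ^ 2 := by
      rw [← hψs, ← mul_pow, hr0]
    have hq1' : (1 + (n (x, t) 0 ^ 2 + n (x, t) 1 ^ 2 + n (x, t) 2 ^ 2)) * pd 1 ψ x ^ 2
        = (n (x, t) 0 * pd 1 (fun z => n (z, t) 0) x + n (x, t) 1 * pd 1 (fun z => n (z, t) 1) x
            + n (x, t) 2 * pd 1 (fun z => n (z, t) 2) x) ^ 2 := by
      rw [← hψs, ← mul_pow, hr1]
    have key : 0 ≤ (1 + (n (x, t) 0 ^ 2 + n (x, t) 1 ^ 2 + n (x, t) 2 ^ 2))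
        * (Gfun (fun y => n (y, t)) x - ∑ s : Fin 2, (pd s.castSucc ψ x) ^ 2) := by
      have iden : (1 + (n (x, t) 0 ^ 2 + n (x, t) 1 ^ 2 + n (x, t) 2 ^ 2))
          * (Gfun (fun y => n (y, t)) x - ∑ s : Fin 2, (pd s.castSucc ψ x) ^ 2)
          = ((pd 0 (fun z => n (z, t) 0) x) ^ 2
            + (pd 0 (fun z => n (z, t) 1) x + n (x, t) 2) ^ 2
            + (pd 0 (fun z => n (z, t) 2) x - n (x, t) 1) ^ 2
            + (pd 1 (fun z => n (z, t) 0) x - n (x, t) 2) ^ 2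
            + (pd 1 (fun z => n (z, t) 1) x) ^ 2
            + (pd 1 (fun z => n (z, t) 2) x + n (x, t) 0) ^ 2)
          + ((n (x, t) 0 * (pd 0 (fun z => n (z, t) 1) x + n (x, t) 2) - n (x, t) 1 * pd 0 (fun z => n (z, t) 0) x) ^ 2
            + (n (x, t) 0 * (pd 0 (fun z => n (z, t) 2) x - n (x, t) 1) - n (x, t) 2 * pd 0 (fun z => n (z, t) 0) x) ^ 2
            + (n (x, t) 1 * (pd 0 (fun z => n (z, t) 2) x - n (x, t) 1) - n (x, t) 2 * (pd 0 (fun z => n (z, t) 1) x + n (x, t) 2)) ^ 2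
            + (n (x, t) 0 * pd 1 (fun z => n (z, t) 1) x - n (x, t) 1 * (pd 1 (fun z => n (z, t) 0) x - n (x, t) 2)) ^ 2
            + (n (x, t) 0 * (pd 1 (fun z => n (z, t) 2) x + n (x, t) 0) - n (x, t) 2 * (pd 1 (fun z => n (z, t) 0) x - n (x, t) 2)) ^ 2
            + (n (x, t) 1 * (pd 1 (fun z => n (z, t) 2) x + n (x, t) 0) - n (x, t) 2 * pd 1 (fun z => n (z, t) 1) x) ^ 2)
          + (1 + (n (x, t) 0 ^ 2 + n (x, t) 1 ^ 2 + n (x, t) 2 ^ 2))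
              * ((n (x, t) 0) ^ 2 + (n (x, t) 1) ^ 2) := by
        simp only [Gfun, curl3, Fin.sum_univ_three, Fin.sum_univ_two, Fin.castSucc_zero,
          Fin.castSucc_one, Matrix.cons_val_zero, Matrix.cons_val_one, Matrix.head_cons,
          Matrix.cons_val_two, Matrix.tail_cons]
        linear_combination -hq0' - hq1'
      rw [iden]
      positivity
    by_contra hcon
    push_neg at hcon
    have hneg := mul_neg_of_pos_of_neg hApos hcon
    linarith [key]
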